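/- arXiv:1808.09952 — 12 statements merged into one kernel-verified Lean document; each statement's English description precedes it below -/
import Mathlib

section
/- If φ(x)φ(y) ∈ σ(xy) for all x,y ∈ A and φ(1) = 1, then for every invertible x ∈ A and every λ ∈ ℂ one has φ(λx) = λφ(x). -/
variable {A : Type*} [NormedRing A] [NormedAlgebra ℂ A] [CompleteSpace A]

lemma aux_mem_spec_algebraMap {z μ : ℂ} (h : z ∈ spectrum ℂ (algebraMap ℂ A μ)) :
    z = μ := by
  by_contra hne
  rw [spectrum.mem_iff, ← map_sub] at h
  exact h ((isUnit_iff_ne_zero.2 (sub_ne_zero.2 hne)).map (algebraMap ℂ A))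

theorem stmt_2 (φ : A → ℂ)
    (hmul : ∀ x y : A, φ x * φ y ∈ spectrum ℂ (x * y))
    (hone : φ 1 = 1) :
    ∀ x : A, IsUnit x → ∀ μ : ℂ, φ (μ • x) = μ * φ x := by
  intro x hx μ
  obtain ⟨u, rfl⟩ := hx
  have h1 : φ ↑u * φ ↑u⁻¹ = 1 := by
    have := hmul ↑u ↑u⁻¹
    rw [u.mul_inv] at this
    have : φ ↑u * φ ↑u⁻¹ ∈ spectrum ℂ (algebraMap ℂ A 1) := by
      simpa using this
    exact aux_mem_spec_algebraMap this
  have h2 : φ (μ • (u : A)) * φ ↑u⁻¹ = μ := by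
    have := hmul (μ • (u : A)) ↑u⁻¹
    rw [smul_mul_assoc, u.mul_inv] at this
    have : φ (μ • (u : A)) * φ ↑u⁻¹ ∈ spectrum ℂ (algebraMap ℂ A μ) := by
      simpa [Algebra.algebraMap_eq_smul_one] using this
    exact aux_mem_spec_algebraMap this
  calc φ (μ • (u : A)) = φ (μ • (u : A)) * (φ ↑u * φ ↑u⁻¹) := by rw [h1, mul_one]
    _ = φ ↑u * (φ (μ • (u : A)) * φ ↑u⁻¹) := by ring
    _ = μ * φ ↑u := by rw [h2, mul_comm]
end

section
/- Suppose every element of A has totally disconnected spectrum. If φ : A → ℂ is continuous, φ(1) = 1, and φ(x)φ(y) ∈ σ(xy) for all x,y, then φ(λ·1 + x) = λ + φ(x) for every x ∈ A and every λ ∈ ℂ. -/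
variable {A : Type*} [NormedRing A] [NormedAlgebra ℂ A] [CompleteSpace A]

theorem stmt_3 (htd : ∀ x : A, IsTotallyDisconnected (spectrum ℂ x))
    (φ : A → ℂ) (hc : Continuous φ)
    (hone : φ 1 = 1)
    (hmul : ∀ x y : A, φ x * φ y ∈ spectrum ℂ (x * y)) :
    ∀ (x : A) (μ : ℂ), φ (μ • (1 : A) + x) = μ + φ x := by
  -- φ z ∈ σ z for all z
  have hmem : ∀ z : A, φ z ∈ spectrum ℂ z := by
    intro z
    have := hmul z 1
    simpa [hone] using this
  intro x μ
  -- g μ = φ (μ•1 + x) - μ maps ℂ into σ x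
  set g : ℂ → ℂ := fun ν => φ (ν • (1 : A) + x) - ν with hg
  have hgmem : ∀ ν : ℂ, g ν ∈ spectrum ℂ x := by
    intro ν
    have h1 : φ (ν • (1 : A) + x) ∈ spectrum ℂ (algebraMap ℂ A ν + x) := by
      simpa [Algebra.algebraMap_eq_smul_one] using hmem (ν • (1 : A) + x)
    rw [← spectrum.singleton_add_eq] at h1
    obtain ⟨s, hs, t, ht, hst⟩ := h1
    simp only [Set.mem_singleton_iff] at hs
    have : g ν = t := by simp only [hg, ← hst, hs]; ring
    rwa [this]
  have hgc : Continuous g := by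
    apply Continuous.sub _ continuous_id
    exact hc.comp ((continuous_id.smul continuous_const).add continuous_const)
  -- image of connected ℂ in totally disconnected σ x is a subsingleton
  have hconn : IsPreconnected (g '' Set.univ) :=
    (isPreconnected_univ).image g hgc.continuousOn
  have hsub : (g '' Set.univ).Subsingleton := by
    have := htd x (g '' Set.univ) (by
      rintro _ ⟨ν, -, rfl⟩; exact hgmem ν) hconn
    exact this
  have : g μ = g 0 := hsub ⟨μ, trivial, rfl⟩ ⟨0, trivial, rfl⟩
  have h0 : g 0 = φ x := by simp [hg]
  rw [h0] at this
  have : φ (μ • (1 : A) + x) - μ = φ x := this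
  linear_combination this
end

section
/- Suppose every element of A has totally disconnected spectrum. If φ : A → ℂ is continuous, φ(1) = 1, and φ(x)φ(y) ∈ σ(xy) for all x,y, then φ(λx) = λφ(x) for every x ∈ A and every λ ∈ ℂ. -/
variable {A : Type*} [NormedRing A] [NormedAlgebra ℂ A] [CompleteSpace A]

theorem stmt_4 (htd : ∀ x : A, IsTotallyDisconnected (spectrum ℂ x))
    (φ : A → ℂ) (hc : Continuous φ)
    (hone : φ 1 = 1)
    (hmul : ∀ x y : A, φ x * φ y ∈ spectrum ℂ (x * y)) :
    ∀ (x : A) (μ : ℂ), φ (μ • x) = μ * φ x := by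
  have hnt : Nontrivial A := by
    by_contra h
    rw [not_nontrivial_iff_subsingleton] at h
    have h1 := hmul 1 1
    have : IsUnit ((algebraMap ℂ A) (φ 1 * φ 1) - 1 * 1) := isUnit_of_subsingleton _
    exact (spectrum.mem_iff.mp h1) this
  have hspec : ∀ x : A, φ x ∈ spectrum ℂ x := by
    intro x
    have := hmul x 1
    simpa [hone] using this
  intro x μ
  rcases eq_or_ne μ 0 with rfl | hμ
  · have h0 : φ (0 : A) ∈ spectrum ℂ (0 : A) := by simpa using hspec 0
    rw [spectrum.zero_eq] at h0
    simpa using h0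
  -- nonzero case
  have hne : (spectrum ℂ x).Nonempty := spectrum.nonempty x
  have key : ∀ ν : ℂ, ν ≠ 0 → ν⁻¹ * φ (ν • x) ∈ spectrum ℂ x := by
    intro ν hν
    have h1 : φ (ν • x) ∈ spectrum ℂ (ν • x) := hspec (ν • x)
    rw [spectrum.smul_eq_smul ν x hne] at h1
    obtain ⟨z, hz, hzz⟩ := h1
    rw [← hzz]
    simpa [smul_eq_mul, inv_mul_cancel_left₀ hν] using hz
  -- h : {0}ᶜ → ℂ, continuous, image in σ(x), domain connected
  set f : ℂ → ℂ := fun ν => ν⁻¹ * φ (ν • x) with hf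
  have hconn : IsConnected ({(0:ℂ)}ᶜ : Set ℂ) :=
    isConnected_compl_singleton_of_one_lt_rank (by simp [Complex.rank_real_complex]) 0
  have hcont : ContinuousOn f ({(0:ℂ)}ᶜ : Set ℂ) := by
    apply ContinuousOn.mul
    · exact ContinuousOn.inv₀ continuousOn_id (fun ν hν => hν)
    · exact (hc.comp (continuous_id.smul continuous_const)).continuousOn
  have himg : f '' ({(0:ℂ)}ᶜ : Set ℂ) ⊆ spectrum ℂ x := by
    rintro - ⟨ν, hν, rfl⟩
    exact key ν hν
  have hconn2 : IsPreconnected (f '' ({(0:ℂ)}ᶜ : Set ℂ)) :=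
    hconn.isPreconnected.image f hcont
  have hsub : Set.Subsingleton (f '' ({(0:ℂ)}ᶜ : Set ℂ)) :=
    (htd x) _ himg hconn2
  have h1 : f 1 = f μ := by
    apply hsub
    · exact ⟨1, by simp, rfl⟩
    · exact ⟨μ, hμ, rfl⟩
  have : (1:ℂ)⁻¹ * φ ((1:ℂ) • x) = μ⁻¹ * φ (μ • x) := h1
  simp only [inv_one, one_mul, one_smul] at this
  field_simp at this ⊢
  linear_combination -this
end

section
/- Suppose every element of A has totally disconnected spectrum and φ : A → ℂ is continuous with φ(1) = 1 and φ(x)φ(y) ∈ σ(xy) for all x,y. If r ∈ A has spectrum σ(r) = {1, k} with k ≠ 0, k ≠ 1, and φ(r) = 1, then φ(rⁿ) = 1 for all natural numbers n ≥ 1. -/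
variable {A : Type*} [NormedRing A] [NormedAlgebra ℂ A] [CompleteSpace A]

theorem stmt_5 (htd : ∀ x : A, IsTotallyDisconnected (spectrum ℂ x))
    (φ : A → ℂ) (hc : Continuous φ)
    (hone : φ 1 = 1)
    (hmul : ∀ x y : A, φ x * φ y ∈ spectrum ℂ (x * y))
    (r : A) (k : ℂ) (hk0 : k ≠ 0) (hk1 : k ≠ 1)
    (hspec : spectrum ℂ r = {1, k})
    (hr : φ r = 1) :
    ∀ n : ℕ, 1 ≤ n → φ (r ^ n) = 1 := by
  intro n hn
  have hpow : ∀ m : ℕ, 0 < m → spectrum ℂ (r ^ m) = {1, k ^ m} := by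
    intro m hm
    rw [spectrum.map_pow_of_pos r hm, hspec]
    ext z
    simp only [Set.mem_image, Set.mem_insert_iff, Set.mem_singleton_iff]
    constructor
    · rintro ⟨w, rfl | rfl, rfl⟩
      · exact Or.inl (one_pow m)
      · exact Or.inr rfl
    · rintro (rfl | rfl)
      · exact ⟨1, Or.inl rfl, one_pow m⟩
      · exact ⟨k, Or.inr rfl, rfl⟩
  have h1 : φ (r ^ n) ∈ spectrum ℂ (r ^ n) := by
    have := hmul (r ^ n) 1
    rwa [hone, mul_one, mul_one] at this
  rw [hpow n hn, Set.mem_insert_iff, Set.mem_singleton_iff] at h1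
  rcases h1 with h1 | h1
  · exact h1
  · by_cases hkn : k ^ n = 1
    · rw [h1, hkn]
    · exfalso
      have h2 := hmul (r ^ n) r
      rw [hr, mul_one, h1, ← pow_succ, hpow (n + 1) (Nat.succ_pos n),
        Set.mem_insert_iff, Set.mem_singleton_iff] at h2
      rcases h2 with h2 | h2
      · exact hkn h2
      · rw [pow_succ] at h2
        nth_rewrite 1 [← mul_one (k ^ n)] at h2
        exact hk1 (mul_left_cancel₀ (pow_ne_zero n hk0) h2).symm
end

section
/- Suppose every element of A has totally disconnected spectrum and φ : A → ℂ is continuous with φ(1) = 1 and φ(x)φ(y) ∈ σ(xy) for all x,y. Then for every invertible x ∈ A and every n ∈ ℕ, φ(xⁿ) = φ(x)ⁿ. -/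
/-!
The spectrum `σ(x)` is compact and totally disconnected, so its complement in `ℂ` is connected.
Otherwise some `a ∉ σ(x)` lies in a bounded component `U`. On the totally disconnected set `σ(x)`,
the function `z - a` has a continuous logarithm `L` (approximate `z` by locally constant
functions and use principal logarithms), and `L` extends to `ℂ` by Tietze. Gluing `exp ∘ L` on
`closure U` to `z - a` outside `U` gives a nowhere-vanishing map `ℂ → ℂ`. Since `ℂ` is simply
connected, this map has a continuous logarithm, so `z - a` has one on a large circle around `a`,
which is impossible: it would have to increase by `2πi` once around the circle.

Hence an invertible `x` is joined to `1` in the group of units: first `x - λ`, with `λ` running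
from `0` to a large scalar `z` through the resolvent set, then `t x - z`, and finally scalars. Along
such a path `γ`, the map `t ↦ φ (γ t) φ ((γ t)⁻¹ x ^ (n + 1))` is continuous with values in the
totally disconnected set `σ(x ^ (n + 1))`, so it is constant. Comparing its ends gives
`φ (x ^ (n + 1)) = φ x * φ (x ^ n)`.
-/

open Complex Metric Set
open scoped Real

theorem IsOpen.frontier_connectedComponentIn_subset_compl {X : Type*} [TopologicalSpace X]
    [LocallyConnectedSpace X] {F : Set X} (hF : IsOpen F) (x : X) :
    frontier (connectedComponentIn F x) ⊆ Fᶜ := by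
  intro z hz hzF
  obtain ⟨y, hyz, hyx⟩ := mem_closure_iff.mp hz.1 _ hF.connectedComponentIn
    (mem_connectedComponentIn hzF)
  rw [connectedComponentIn_eq hyx, ← connectedComponentIn_eq hyz] at hz
  exact hz.2 (by rw [hF.connectedComponentIn.interior_eq]; exact mem_connectedComponentIn hzF)

theorem JoinedIn.map_of_mapsTo {X Y : Type*} [TopologicalSpace X] [TopologicalSpace Y]
    {F : Set X} {G : Set Y} {x y : X} (h : JoinedIn F x y) {f : X → Y} (hf : Continuous f)
    (hFG : MapsTo f F G) : JoinedIn G (f x) (f y) :=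
  (h.map hf).mono hFG.image_subset

theorem exists_continuous_exp_eq_of_totallyDisconnectedSpace {X : Type*} [TopologicalSpace X]
    [CompactSpace X] [T2Space X] [TotallyDisconnectedSpace X] (f : C(X, ℂ))
    (hf : ∀ x, f x ≠ 0) : ∃ L : C(X, ℂ), ∀ x, exp (L x) = f x := by
  rcases isEmpty_or_nonempty X with hX | hX
  · exact ⟨0, isEmptyElim⟩
  obtain ⟨x₀, -, hx₀⟩ := isCompact_univ.exists_isMinOn univ_nonempty f.continuous.norm.continuousOn
  have hS : {p : ℂ × ℂ | dist p.1 p.2 < ‖f x₀‖} ∈ nhdsSet (diagonal ℂ) :=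
    (isOpen_lt continuous_dist continuous_const).mem_nhdsSet.mpr fun p (hp : p.1 = p.2) => by
      simpa [hp] using hf x₀
  obtain ⟨n, g, c, hg, hgc⟩ := f.exists_finite_approximation_of_mem_nhds_diagonal hS
  -- `c ∘ g` is locally constant and so close to `f` that `(c ∘ g) / f` has a principal logarithm
  have hslit : ∀ x, c (g x) / f x ∈ slitPlane := fun x => by
    have hlt : ‖(c (g x) - f x) / f x‖ < 1 := by
      rw [norm_div, div_lt_one (norm_pos_iff.mpr (hf x)), ← dist_eq_norm, dist_comm]
      exact (hgc x).trans_le (hx₀ (mem_univ x))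
    convert mem_slitPlane_of_norm_lt_one hlt using 1
    field_simp [hf x]
    ring
  refine ⟨⟨fun x => log (c (g x)) - log (c (g x) / f x), ?_⟩, fun x => ?_⟩
  · exact ((continuous_of_discreteTopology (f := fun i => log (c i))).comp hg).sub
      (Continuous.clog ((continuous_of_discreteTopology.comp hg).div f.continuous hf) hslit)
  · have hc : c (g x) ≠ 0 := fun h => zero_notMem_slitPlane (by simpa [h] using hslit x)
    simp only [ContinuousMap.coe_mk, exp_sub, exp_log hc, exp_log (slitPlane_ne_zero (hslit x))]
    field_simp [hf x]

theorem exists_continuous_exp_eq_sub_of_isTotallyDisconnected {S : Set ℂ} (hS : IsCompact S)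
    (htd : IsTotallyDisconnected S) {a : ℂ} (ha : a ∉ S) :
    ∃ L : C(ℂ, ℂ), ∀ z ∈ S, exp (L z) = z - a := by
  have : CompactSpace S := isCompact_iff_compactSpace.mp hS
  have : TotallyDisconnectedSpace S := totallyDisconnectedSpace_subtype_iff.mpr htd
  obtain ⟨L, hL⟩ := exists_continuous_exp_eq_of_totallyDisconnectedSpace
    ⟨fun z : S => (z : ℂ) - a, by fun_prop⟩ fun z => sub_ne_zero.mpr fun h => ha (h ▸ z.2)
  obtain ⟨L', hL'⟩ := L.exists_restrict_eq hS.isClosed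
  exact ⟨L', fun z hz => by simpa [← hL'] using hL ⟨z, hz⟩⟩

theorem exists_continuous_exp_eq_of_simplyConnectedSpace {X : Type*} [TopologicalSpace X]
    [SimplyConnectedSpace X] [LocallyPathConnectedSpace X] (f : C(X, ℂ)) (hf : ∀ x, f x ≠ 0) :
    ∃ G : C(X, ℂ), ∀ x, exp (G x) = f x := by
  obtain ⟨x₀⟩ : Nonempty X := inferInstance
  obtain ⟨G, ⟨-, hG⟩, -⟩ :=
    isCoveringMapOn_exp.existsUnique_continuousMap_lifts f (exp_log (hf x₀)) hf
  exact ⟨G, congrFun hG⟩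

theorem not_forall_exp_eq_sub_of_mem_sphere {G : ℂ → ℂ} {a : ℂ} {R : ℝ}
    (hG : ContinuousOn G (sphere a R)) (hR : 0 < R) :
    ¬ ∀ z ∈ sphere a R, exp (G z) = z - a := by
  intro hlog
  set e : ℝ → ℂ := fun θ => a + R * exp (θ * I)
  have he : ∀ θ, e θ ∈ sphere a R := fun θ => by
    simp [e, norm_exp_ofReal_mul_I, abs_of_pos hR]
  -- `k θ = G (e θ) - θ I` is a continuous logarithm of the constant `R`
  set k : ℝ → ℂ := fun θ => G (e θ) - θ * I
  have hk : Continuous k :=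
    (hG.comp_continuous (by fun_prop) he).sub (by fun_prop)
  have hkR : range k ⊆ range fun n : ℤ => (Real.log R : ℂ) + n * (2 * π * I) := by
    rintro _ ⟨θ, rfl⟩
    have : exp (k θ) = exp (Real.log R) := by
      rw [exp_sub, hlog _ (he θ), ← ofReal_exp, Real.exp_log hR]
      field_simp [exp_ne_zero]
      simp [e, mul_comm]
    obtain ⟨n, hn⟩ := exp_eq_exp_iff_exists_int.mp this
    exact ⟨n, hn.symm⟩
  have hconst := (countable_range _).isTotallyDisconnected _ hkR (isPreconnected_range hk)
    (mem_range_self 0) (mem_range_self (2 * π))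
  have he2π : e (2 * π) = e 0 := by simp [e, exp_two_pi_mul_I]
  simp only [k, he2π, ofReal_zero, zero_mul, sub_zero, ofReal_mul, ofReal_ofNat] at hconst
  exact two_pi_I_ne_zero (sub_eq_self.mp hconst.symm)

theorem not_isBounded_connectedComponentIn_compl {S : Set ℂ} (hS : IsCompact S)
    (htd : IsTotallyDisconnected S) {a : ℂ} (ha : a ∉ S) :
    ¬ Bornology.IsBounded (connectedComponentIn Sᶜ a) := by
  classical
  set U := connectedComponentIn Sᶜ a
  intro hU
  obtain ⟨L, hL⟩ := exists_continuous_exp_eq_sub_of_isTotallyDisconnected hS htd ha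
  have hfr : ∀ z ∈ frontier {z | z ∈ closure U}, exp (L z) = z - a := fun z hz =>
    hL z (compl_compl S ▸ hS.isClosed.isOpen_compl.frontier_connectedComponentIn_subset_compl a
      (frontier_closure_subset hz))
  set M : C(ℂ, ℂ) := ⟨fun z => if z ∈ closure U then exp (L z) else z - a,
    Continuous.if hfr (by fun_prop) (by fun_prop)⟩
  have hM : ∀ z, M z ≠ 0 := fun z => by
    by_cases hz : z ∈ closure U
    · simp [M, hz, exp_ne_zero]
    · simp only [M, ContinuousMap.coe_mk, if_neg hz, sub_ne_zero]
      rintro rfl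
      exact hz (subset_closure (mem_connectedComponentIn ha))
  obtain ⟨G, hG⟩ := exists_continuous_exp_eq_of_simplyConnectedSpace M hM
  obtain ⟨R, hR⟩ := (isBounded_iff_subset_closedBall a).mp hU
  have hR0 : 0 ≤ R := dist_nonneg.trans (hR (mem_connectedComponentIn ha))
  refine not_forall_exp_eq_sub_of_mem_sphere (a := a) G.continuous.continuousOn
    (by linarith : 0 < R + 1) fun z hz => ?_
  have hzU : z ∉ closure U := fun h => by
    have := isClosed_closedBall.closure_subset_iff.mpr hR h
    rw [mem_closedBall, mem_sphere.mp hz] at this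
    linarith
  simpa [M, hzU] using hG z

theorem exists_joinedIn_compl_lt_norm {S : Set ℂ} (hS : IsCompact S)
    (htd : IsTotallyDisconnected S) {a : ℂ} (ha : a ∉ S) (r : ℝ) :
    ∃ z, r < ‖z‖ ∧ JoinedIn Sᶜ a z := by
  obtain ⟨z, hzU, hz⟩ : ∃ z ∈ connectedComponentIn Sᶜ a, r < ‖z‖ := by
    by_contra! h
    exact not_isBounded_connectedComponentIn_compl hS htd ha
      (isBounded_iff_forall_norm_le.mpr ⟨r, h⟩)
  have hU := hS.isClosed.isOpen_compl.connectedComponentIn (x := a)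
  have hUpath := hU.isConnected_iff_isPathConnected.mp (isConnected_connectedComponentIn_iff.mpr ha)
  exact ⟨z, hz, (hUpath.joinedIn a (mem_connectedComponentIn ha) z hzU).mono
    (connectedComponentIn_subset _ a)⟩

theorem isUnit_sub_algebraMap_of_notMem_spectrum {R A : Type*} [CommRing R] [Ring A]
    [Algebra R A] {a : A} {r : R} (h : r ∉ spectrum R a) : IsUnit (a - algebraMap R A r) := by
  simpa using (spectrum.notMem_iff.mp h).neg

theorem joinedIn_setOf_isUnit_one_of_isTotallyDisconnected_spectrum {A : Type*} [NormedRing A]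
    [NormedAlgebra ℂ A] [CompleteSpace A] {x : A} (hx : IsUnit x)
    (htd : IsTotallyDisconnected (spectrum ℂ x)) : JoinedIn {y : A | IsUnit y} x 1 := by
  obtain ⟨z, hz, hγ⟩ := exists_joinedIn_compl_lt_norm (spectrum.isCompact x) htd
    ((spectrum.zero_notMem_iff ℂ).mpr hx) (‖x‖ * ‖(1 : A)‖)
  have hz0 : z ≠ 0 := norm_pos_iff.mp ((by positivity : 0 ≤ ‖x‖ * ‖(1 : A)‖).trans_lt hz)
  have h₁ : JoinedIn {y : A | IsUnit y} x (x - algebraMap ℂ A z) := by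
    simpa using hγ.map_of_mapsTo (f := fun w => x - algebraMap ℂ A w) (G := {y | IsUnit y})
      (by fun_prop) fun w hw => isUnit_sub_algebraMap_of_notMem_spectrum hw
  -- `z` stays outside the spectrum of every `y` with `‖y‖ ≤ ‖x‖`, since `‖z‖ > ‖x‖ ‖1‖`
  have h₂ : JoinedIn {y : A | IsUnit y} (x - algebraMap ℂ A z) (-algebraMap ℂ A z) := by
    have hB := ((convex_closedBall (0 : A) ‖x‖).isPathConnected
      ⟨0, mem_closedBall_self (norm_nonneg x)⟩).joinedIn x (by simp) 0 (by simp)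
    simpa using hB.map_of_mapsTo (f := fun y => y - algebraMap ℂ A z) (G := {y | IsUnit y})
      (by fun_prop) fun y hy => isUnit_sub_algebraMap_of_notMem_spectrum fun hzy =>
        (spectrum.norm_le_norm_mul_of_mem hzy).not_gt (hz.trans_le' (by
          gcongr; simpa using hy))
  have h₃ : JoinedIn {y : A | IsUnit y} (-algebraMap ℂ A z) 1 := by
    have hC := (isPathConnected_compl_singleton_of_one_lt_rank (by simp [Complex.rank_real_complex])
      (0 : ℂ)).joinedIn (-z) (by simpa using hz0) 1 (by simp)
    simpa using hC.map_of_mapsTo (G := {y : A | IsUnit y}) (continuous_algebraMap ℂ A)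
      fun w hw => (isUnit_iff_ne_zero.mpr hw).map (algebraMap ℂ A)
  exact (h₁.trans h₂).trans h₃

theorem map_mul_map_inverse_mul_of_joinedIn {R A : Type*} [CommSemiring R] [TopologicalSpace R]
    [ContinuousMul R] [NormedRing A] [CompleteSpace A] [Algebra R A] {φ : A → R}
    (hc : Continuous φ) (hone : φ 1 = 1) (hmul : ∀ x y : A, φ x * φ y ∈ spectrum R (x * y))
    {u w : A} (hw : IsTotallyDisconnected (spectrum R w)) (hu : JoinedIn {y : A | IsUnit y} 1 u) :
    φ u * φ (Ring.inverse u * w) = φ w := by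
  obtain ⟨γ, hγ⟩ := hu
  set q : unitInterval → R := fun t => φ (γ t) * φ (Ring.inverse (γ t) * w)
  have hinv : Continuous fun t => Ring.inverse (γ t) := continuous_iff_continuousAt.mpr fun t =>
    ((hγ t).unit_spec ▸ NormedRing.inverse_continuousAt (hγ t).unit).comp γ.continuous.continuousAt
  have hq : Continuous q := (hc.comp γ.continuous).mul (hc.comp (hinv.mul continuous_const))
  have hqw : range q ⊆ spectrum R w := by
    rintro _ ⟨t, rfl⟩
    simpa [← mul_assoc, Ring.mul_inverse_cancel _ (hγ t)] using hmul (γ t) (Ring.inverse (γ t) * w)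
  have h01 := hw _ hqw (isPreconnected_range hq) (mem_range_self 0) (mem_range_self 1)
  simpa [q, hone] using h01.symm

variable {A : Type*} [NormedRing A] [NormedAlgebra ℂ A] [CompleteSpace A]

theorem stmt_6 (htd : ∀ x : A, IsTotallyDisconnected (spectrum ℂ x))
    (φ : A → ℂ) (hc : Continuous φ)
    (hone : φ 1 = 1)
    (hmul : ∀ x y : A, φ x * φ y ∈ spectrum ℂ (x * y)) :
    ∀ x : A, IsUnit x → ∀ n : ℕ, φ (x ^ n) = (φ x) ^ n := by
  intro x hx n
  have hjoin := (joinedIn_setOf_isUnit_one_of_isTotallyDisconnected_spectrum hx (htd x)).symm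
  induction n with
  | zero => simpa using hone
  | succ n ih =>
    have key := map_mul_map_inverse_mul_of_joinedIn hc hone hmul (htd (x ^ (n + 1))) hjoin
    rw [pow_succ', Ring.inverse_mul_cancel_left _ _ hx, ih] at key
    rw [pow_succ', ← key, pow_succ']
end

section
/- Suppose every element of A has totally disconnected spectrum and φ : A → ℂ is continuous with φ(1) = 1 and φ(x)φ(y) ∈ σ(xy) for all x,y. Then φ(exp x) = exp(φ(x)) for every x ∈ A. -/
/-!
Write `f t = φ (exp (t • x))`. For fixed `w`, the map `k ↦ f (w + k) * f (w - k)` is continuous with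
values in the totally disconnected set `σ (exp ((2 * w) • x))`, hence constant; so `f` is a
continuous additive character of `ℂ`.

Fix `c ∉ σ x` and put `P = φ (x - c • 1)`, so that `P + c ∈ σ x` and `P ≠ 0`. Inside the
bicommutant of `x` (a commutative Banach algebra with the same spectra) Gelfand theory shows that
`σ (s⁻¹ • (exp (s • x) - e^{sc} • 1) * exp (T • x))` consists of the values
`s⁻¹ (e^{sμ} - e^{sc}) e^{Tμ}`, `μ ∈ σ x`. Applying the hypothesis on `φ` to this product and
letting `s → 0` gives, for every `T`, some `μ_T ∈ σ x` with `(μ_T - c) e^{T μ_T} = P f(T)`. For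
small real `T` this `μ_T` is unique, hence continuous in `T`, hence constant by total
disconnectedness; as `μ_0 = P + c`, we get `f T = e^{T (P + c)}` near `0`, and therefore
`f 1 = exp (φ (x - c • 1) + c)`. Finally `σ x` has empty interior, so letting `c → 0` outside
`σ x` gives `φ (exp x) = exp (φ x)`.
-/

open Filter Topology Set NormedSpace

section Topology

variable {X Y Z : Type*} [TopologicalSpace X] [TopologicalSpace Y] [TopologicalSpace Z]

theorem MapClusterPt.eq_of_tendsto [T2Space Z] {l : Filter X} {G : X → Y → Z} {g : X → Y}
    {x : X} {y : Y} {z : Z} (hG : ContinuousAt (Function.uncurry G) (x, y)) (hl : l ≤ 𝓝 x)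
    (hg : MapClusterPt y l g) (hz : Tendsto (fun t => G t (g t)) l (𝓝 z)) : G x y = z := by
  have hxy : MapClusterPt (x, y) l fun t => (t, g t) := by
    rw [((𝓝 x).basis_sets.prod_nhds (𝓝 y).basis_sets).mapClusterPt_iff_frequently]
    rintro ⟨U, V⟩ ⟨hU, hV⟩
    exact ((mapClusterPt_iff_frequently.1 hg V hV).and_eventually (hl hU)).mono
      fun _ h => ⟨h.2, h.1⟩
  exact eq_of_nhds_neBot (ClusterPt.mono (hxy.continuousAt_comp hG) hz).neBot

theorem IsCompact.continuousOn_of_unique_solution [T2Space Z] {K : Set Y} (hK : IsCompact K)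
    {S : Set X} {G : X → Y → Z} (hG : Continuous (Function.uncurry G)) {h : X → Z}
    (hh : ContinuousOn h S)
    {g : X → Y} (hgK : ∀ t ∈ S, g t ∈ K) (hgG : ∀ t ∈ S, G t (g t) = h t)
    (huniq : ∀ t ∈ S, ∀ y ∈ K, G t y = h t → y = g t) : ContinuousOn g S := by
  intro t ht
  refine hK.tendsto_nhds_of_unique_mapClusterPt (eventually_nhdsWithin_of_forall hgK)
    fun y hyK hy => huniq t ht y hyK (hy.eq_of_tendsto hG.continuousAt nhdsWithin_le_nhds ?_)
  exact (hh t ht).congr' (eventually_nhdsWithin_of_forall fun t' ht' => (hgG t' ht').symm)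

theorem IsTotallyDisconnected.interior_eq_empty [LocallyConnectedSpace X]
    [∀ x : X, (𝓝[≠] x).NeBot] {s : Set X} (hs : IsTotallyDisconnected s) : interior s = ∅ := by
  refine eq_empty_iff_forall_notMem.2 fun z hz => not_isOpen_singleton z ?_
  have hsub := hs _ ((connectedComponentIn_subset _ z).trans interior_subset)
    isPreconnected_connectedComponentIn
  rw [← hsub.eq_singleton_of_mem (mem_connectedComponentIn hz)]
  exact isOpen_interior.connectedComponentIn

end Topology

section Spectrum

variable {R B : Type*} [CommRing R] [Ring B] [Algebra R B] {s : Set B}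

theorem Subalgebra.isUnit_of_isUnit_val_centralizer {b : Subalgebra.centralizer R s}
    (hb : IsUnit (b : B)) : IsUnit b := by
  obtain ⟨u, hu⟩ := hb
  have hinv : (↑u⁻¹ : B) ∈ Subalgebra.centralizer R s := fun g hg =>
    (Commute.units_inv_right (hu ▸ b.2 g hg : Commute g u)).eq
  refine ⟨⟨b, ⟨_, hinv⟩, Subtype.ext ?_, Subtype.ext ?_⟩, rfl⟩
  · exact (congrArg (· * _) hu).symm.trans u.mul_inv
  · exact (congrArg (_ * ·) hu).symm.trans u.inv_mul

theorem Subalgebra.spectrum_centralizer_eq (b : Subalgebra.centralizer R s) :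
    spectrum R b = spectrum R (b : B) := by
  refine Set.Subset.antisymm (fun z hz => ?_) (spectrum.subset_subalgebra b)
  by_contra hzA
  exact hz (isUnit_of_isUnit_val_centralizer (by simpa using spectrum.notMem_iff.1 hzA))

theorem apply_mem_spectrum_of_mul_mem {φ : B → R} (hone : φ 1 = 1)
    (hmul : ∀ x y : B, φ x * φ y ∈ spectrum R (x * y)) (y : B) : φ y ∈ spectrum R y := by
  simpa [hone] using hmul y 1

end Spectrum

theorem Complex.continuous_dslope_exp : Continuous (dslope Complex.exp 0) :=
  continuousOn_univ.1 <| (continuousOn_dslope univ_mem).2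
    ⟨Complex.continuous_exp.continuousOn, Complex.differentiableAt_exp⟩

theorem Complex.mul_dslope_exp_mul {s : ℂ} (hs : s ≠ 0) (w : ℂ) :
    w * dslope Complex.exp 0 (s * w) = s⁻¹ * (Complex.exp (s * w) - 1) := by
  rcases eq_or_ne w 0 with rfl | hw
  · simp
  rw [dslope_of_ne _ (mul_ne_zero hs hw), slope_def_field]
  field_simp
  simp

theorem Complex.injOn_sub_mul_exp {c T : ℂ} {R : ℝ} (hT : ‖T‖ * (4 * R + 2 * ‖c‖) < 1) :
    InjOn (fun μ => (μ - c) * Complex.exp (T * μ)) (Metric.closedBall 0 R) := by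
  intro μ₁ h₁ μ₂ h₂ (h : (μ₁ - c) * Complex.exp (T * μ₁) = (μ₂ - c) * Complex.exp (T * μ₂))
  rw [mem_closedBall_zero_iff] at h₁ h₂
  have hdiff : μ₁ - μ₂ = (μ₂ - c) * (Complex.exp (T * (μ₂ - μ₁)) - 1) := by
    have := Complex.exp_ne_zero (T * μ₁)
    rw [mul_sub T, Complex.exp_sub, mul_sub, mul_one, mul_div_assoc', ← h,
      mul_div_cancel_right₀ _ this]
    ring
  have hR : 0 ≤ R := (norm_nonneg _).trans h₂
  have hsmall : ‖T * (μ₂ - μ₁)‖ ≤ 1 := by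
    rw [norm_mul]
    nlinarith [norm_sub_le μ₂ μ₁, norm_nonneg T, norm_nonneg c]
  have hle : ‖μ₁ - μ₂‖ ≤ ‖μ₂ - c‖ * (2 * ‖T‖) * ‖μ₁ - μ₂‖ :=
    calc ‖μ₁ - μ₂‖ = ‖μ₂ - c‖ * ‖Complex.exp (T * (μ₂ - μ₁)) - 1‖ := by rw [hdiff, norm_mul]
      _ ≤ ‖μ₂ - c‖ * (2 * ‖T * (μ₂ - μ₁)‖) := by gcongr; exact Complex.norm_exp_sub_one_le hsmall
      _ = ‖μ₂ - c‖ * (2 * ‖T‖) * ‖μ₁ - μ₂‖ := by rw [norm_mul, norm_sub_rev μ₂ μ₁]; ring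
  have hμc : ‖μ₂ - c‖ * (2 * ‖T‖) < 1 := by
    nlinarith [norm_sub_le μ₂ c, norm_nonneg T, norm_nonneg c]
  exact sub_eq_zero.1 (norm_eq_zero.1 (by nlinarith [norm_nonneg (μ₁ - μ₂)]))

section BanachAlgebra

variable {𝔸 : Type*} [NormedRing 𝔸] [NormedAlgebra ℂ 𝔸] {φ : 𝔸 → ℂ}

noncomputable instance : NormedAlgebra ℚ 𝔸 := NormedAlgebra.restrictScalars ℚ ℂ 𝔸

abbrev bicommutant (x : 𝔸) : Subalgebra ℂ 𝔸 := Subalgebra.centralizer ℂ (Set.centralizer {x})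

theorem self_mem_bicommutant (x : 𝔸) : x ∈ bicommutant x := Set.subset_centralizer_centralizer rfl

noncomputable instance (x : 𝔸) : NormedCommRing (bicommutant x) :=
  { (inferInstance : NormedRing (bicommutant x)) with
    mul_comm := fun a b => Subtype.ext <|
      Set.centralizer_centralizer_comm_of_comm (by simp) _ a.2 _ b.2 }

variable [CompleteSpace 𝔸]

instance (x : 𝔸) : CompleteSpace (bicommutant x) :=
  (Set.isClosed_centralizer _).completeSpace_coe

theorem exists_mem_spectrum_of_mem_spectrum_exp (x : 𝔸) (s T c : ℂ) {z : ℂ}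
    (hz : z ∈ spectrum ℂ (s⁻¹ • (exp (s • x) - Complex.exp (s * c) • 1) * exp (T • x))) :
    ∃ μ ∈ spectrum ℂ x,
      z = s⁻¹ * (Complex.exp (s * μ) - Complex.exp (s * c)) * Complex.exp (T * μ) := by
  set y : bicommutant x := ⟨x, self_mem_bicommutant x⟩
  have hval : ∀ w : bicommutant x, ((exp w : bicommutant x) : 𝔸) = exp (w : 𝔸) :=
    map_exp (bicommutant x).val continuous_subtype_val
  set b : bicommutant x := s⁻¹ • (exp (s • y) - Complex.exp (s * c) • 1) * exp (T • y)
  have hb : (b : 𝔸) = s⁻¹ • (exp (s • x) - Complex.exp (s * c) • 1) * exp (T • x) := by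
    simp [b, hval, y]
  rw [← hb, ← Subalgebra.spectrum_centralizer_eq] at hz
  obtain ⟨χ, rfl⟩ := WeakDual.CharacterSpace.mem_spectrum_iff_exists.1 hz
  refine ⟨χ y, ?_, ?_⟩
  · simpa [Subalgebra.spectrum_centralizer_eq] using AlgHom.apply_mem_spectrum χ y
  · simp [b, map_exp χ (map_continuous χ), Complex.exp_eq_exp_ℂ, smul_eq_mul, mul_assoc]

theorem tendsto_inv_smul_exp_smul_sub (x : 𝔸) (c : ℂ) :
    Tendsto (fun s : ℂ => s⁻¹ • (exp (s • x) - Complex.exp (s * c) • 1)) (𝓝[≠] 0)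
      (𝓝 (x - c • 1)) := by
  have hx : HasDerivAt (fun s : ℂ => exp (s • x)) x 0 := by
    simpa using hasDerivAt_exp_smul_const (𝕂 := ℂ) x 0
  have hc : HasDerivAt (fun s : ℂ => Complex.exp (s * c) • (1 : 𝔸)) (c • 1) 0 := by
    simpa using (((hasDerivAt_id (0 : ℂ)).mul_const c).cexp).smul_const (1 : 𝔸)
  refine (hasDerivAt_iff_tendsto_slope.1 (hx.sub hc)).congr fun s => ?_
  simp [slope_def_module]

theorem exists_mem_spectrum_sub_mul_exp_eq (hc : Continuous φ)
    (hmul : ∀ x y : 𝔸, φ x * φ y ∈ spectrum ℂ (x * y)) (x : 𝔸) (c T : ℂ) :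
    ∃ μ ∈ spectrum ℂ x, (μ - c) * Complex.exp (T * μ) = φ (x - c • 1) * φ (exp (T • x)) := by
  choose μ hμ hμeq using fun s : ℂ =>
    exists_mem_spectrum_of_mem_spectrum_exp x s T c (hmul _ (exp (T • x)))
  obtain ⟨μ₀, hμ₀, hcl : MapClusterPt μ₀ _ μ⟩ := (spectrum.isCompact x).exists_mapClusterPt
    (f := 𝓝[≠] (0 : ℂ)) (tendsto_principal.2 (Eventually.of_forall hμ))
  set E := dslope Complex.exp 0
  -- `G s ν = s⁻¹ (e^{sν} - e^{sc}) e^{Tν}` for `s ≠ 0`, extended continuously to `s = 0`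
  set G : ℂ → ℂ → ℂ := fun s ν => (ν * E (s * ν) - c * E (s * c)) * Complex.exp (T * ν)
  have hG : Continuous (Function.uncurry G) := by
    have hE : Continuous E := Complex.continuous_dslope_exp
    simp only [G, Function.uncurry_def]
    fun_prop
  refine ⟨μ₀, hμ₀, ?_⟩
  convert hcl.eq_of_tendsto (G := G) hG.continuousAt nhdsWithin_le_nhds ?_ using 1
  · simp [G, E, dslope_same]
  refine (((hc.tendsto _).comp (tendsto_inv_smul_exp_smul_sub x c)).mul_const _).congr' ?_
  filter_upwards [self_mem_nhdsWithin] with s hs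
  simp only [Function.comp_apply, G, E, Complex.mul_dslope_exp_mul hs, hμeq s]
  ring

theorem apply_exp_add_smul (htd : ∀ x : 𝔸, IsTotallyDisconnected (spectrum ℂ x))
    (hc : Continuous φ) (hone : φ 1 = 1) (hmul : ∀ x y : 𝔸, φ x * φ y ∈ spectrum ℂ (x * y))
    (x : 𝔸) (u v : ℂ) : φ (exp ((u + v) • x)) = φ (exp (u • x)) * φ (exp (v • x)) := by
  set f := fun t : ℂ => φ (exp (t • x))
  have hsym : ∀ w k : ℂ, f (w + k) * f (w - k) = f w * f w := by
    intro w k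
    have hmem : ∀ j, f (w + j) * f (w - j) ∈ spectrum ℂ (exp ((2 * w) • x)) := fun j => by
      convert hmul (exp ((w + j) • x)) (exp ((w - j) • x)) using 2
      rw [← exp_add_of_commute (((Commute.refl x).smul_left _).smul_right _), ← add_smul]
      ring_nf
    have hcont : Continuous fun j => f (w + j) * f (w - j) := by
      simp only [f]
      fun_prop
    simpa using htd _ _ (range_subset_iff.2 hmem) (isPreconnected_range hcont) (mem_range_self k)
      (mem_range_self 0)
  have h₁ := hsym ((u + v) / 2) ((u - v) / 2)
  have h₂ := hsym ((u + v) / 2) ((u + v) / 2)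
  have hf0 : f 0 = 1 := by simp [f, hone]
  rw [show (u + v) / 2 + (u - v) / 2 = u by ring, show (u + v) / 2 - (u - v) / 2 = v by ring] at h₁
  rw [add_halves, sub_self, hf0, mul_one] at h₂
  exact h₂.trans h₁.symm

theorem exists_pos_apply_exp_smul_eq (htd : ∀ x : 𝔸, IsTotallyDisconnected (spectrum ℂ x))
    (hc : Continuous φ) (hone : φ 1 = 1) (hmul : ∀ x y : 𝔸, φ x * φ y ∈ spectrum ℂ (x * y))
    {x : 𝔸} {c : ℂ} (hcx : c ∉ spectrum ℂ x) :
    ∃ δ > 0, ∀ T ∈ Icc (0 : ℝ) δ,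
      φ (exp ((T : ℂ) • x)) = Complex.exp (T * (φ (x - c • 1) + c)) := by
  set P := φ (x - c • 1)
  have hP : P + c ∈ spectrum ℂ x := by
    rw [spectrum.add_mem_iff, ← sub_eq_neg_add, Algebra.algebraMap_eq_smul_one]
    exact apply_mem_spectrum_of_mul_mem hone hmul _
  have hP0 : P ≠ 0 := fun h => hcx (by simpa [h] using hP)
  set R := ‖x‖ * ‖(1 : 𝔸)‖
  set M := 4 * R + 2 * ‖c‖
  have hM : 0 ≤ M := by positivity
  set δ := (M + 1)⁻¹
  have hδ : 0 < δ := by positivity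
  have hsmall : ∀ T ∈ Icc (0 : ℝ) δ, ‖(T : ℂ)‖ * M < 1 := fun T hT => by
    rw [Complex.norm_real, Real.norm_of_nonneg hT.1]
    calc T * M ≤ δ * M := by gcongr; exact hT.2
      _ < 1 := by rw [inv_mul_lt_one₀ (by positivity)]; linarith
  choose g hgσ hgeq using fun T : ℝ => exists_mem_spectrum_sub_mul_exp_eq hc hmul x c T
  have huniq : ∀ T ∈ Icc (0 : ℝ) δ, ∀ μ ∈ spectrum ℂ x,
      (μ - c) * Complex.exp (T * μ) = P * φ (exp ((T : ℂ) • x)) → μ = g T :=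
    fun T hT μ hμ h => Complex.injOn_sub_mul_exp (hsmall T hT)
      (spectrum.subset_closedBall_norm_mul x hμ) (spectrum.subset_closedBall_norm_mul x (hgσ T))
      (h.trans (hgeq T).symm)
  have h0 : (0 : ℝ) ∈ Icc 0 δ := ⟨le_rfl, hδ.le⟩
  have hg0 : g 0 = P + c := (huniq 0 h0 (P + c) hP (by simp [hone])).symm
  have hgcont : ContinuousOn g (Icc 0 δ) :=
    (spectrum.isCompact x).continuousOn_of_unique_solution
      (G := fun (T : ℝ) μ => (μ - c) * Complex.exp (T * μ)) (by fun_prop)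
      (h := fun T : ℝ => P * φ (exp ((T : ℂ) • x))) (by fun_prop) (fun T _ => hgσ T)
      (fun T _ => hgeq T) huniq
  have hconst : ∀ T ∈ Icc (0 : ℝ) δ, g T = P + c := fun T hT =>
    hg0 ▸ htd x _ (image_subset_iff.2 fun T _ => hgσ T) (isPreconnected_Icc.image g hgcont)
      (mem_image_of_mem g hT) (mem_image_of_mem g h0)
  refine ⟨δ, hδ, fun T hT => mul_left_cancel₀ hP0 ?_⟩
  calc P * φ (exp ((T : ℂ) • x)) = (g T - c) * Complex.exp (T * g T) := (hgeq T).symm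
    _ = P * Complex.exp (T * (P + c)) := by rw [hconst T hT, add_sub_cancel_right]

theorem apply_exp_eq_exp_apply_sub_add (htd : ∀ x : 𝔸, IsTotallyDisconnected (spectrum ℂ x))
    (hc : Continuous φ) (hone : φ 1 = 1) (hmul : ∀ x y : 𝔸, φ x * φ y ∈ spectrum ℂ (x * y))
    {x : 𝔸} {c : ℂ} (hcx : c ∉ spectrum ℂ x) :
    φ (exp x) = Complex.exp (φ (x - c • 1) + c) := by
  obtain ⟨δ, hδ, hexp⟩ := exists_pos_apply_exp_smul_eq htd hc hone hmul hcx
  obtain ⟨n, hn⟩ := exists_nat_one_div_lt hδ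
  let ψ : AddChar ℂ ℂ :=
    { toFun := fun t => φ (exp (t • x))
      map_zero_eq_one' := by simp [hone]
      map_add_eq_mul' := apply_exp_add_smul htd hc hone hmul x }
  set T : ℝ := 1 / (n + 1)
  have hT : (n + 1 : ℕ) • (T : ℂ) = 1 := by simp [T]; field_simp
  calc φ (exp x) = ψ ((n + 1 : ℕ) • (T : ℂ)) := by simp [ψ, hT]
    _ = ψ T ^ (n + 1) := ψ.map_nsmul_eq_pow _ _
    _ = Complex.exp (φ (x - c • 1) + c) := by
      rw [show ψ T = φ (exp ((T : ℂ) • x)) from rfl, hexp T ⟨by positivity, hn.le⟩,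
        ← Complex.exp_nat_mul, ← mul_assoc, ← nsmul_eq_mul, hT, one_mul]

end BanachAlgebra

variable {A : Type*} [NormedRing A] [NormedAlgebra ℂ A] [CompleteSpace A]

theorem stmt_7 (htd : ∀ x : A, IsTotallyDisconnected (spectrum ℂ x))
    (φ : A → ℂ) (hc : Continuous φ)
    (hone : φ 1 = 1)
    (hmul : ∀ x y : A, φ x * φ y ∈ spectrum ℂ (x * y)) :
    ∀ x : A, φ (NormedSpace.exp x) = Complex.exp (φ x) := by
  intro x
  have hdense : Dense (spectrum ℂ x)ᶜ :=
    interior_eq_empty_iff_dense_compl.1 (htd x).interior_eq_empty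
  have hcont : Continuous fun c : ℂ => Complex.exp (φ (x - c • 1) + c) := by fun_prop
  simpa using congrFun (Continuous.ext_on hdense continuous_const hcont
    fun c hcx => apply_exp_eq_exp_apply_sub_add htd hc hone hmul hcx) 0
end

section
/- Suppose every element of A has totally disconnected spectrum. If φ : A → ℂ is continuous, φ(1) = 1, and φ(x)φ(y) ∈ σ(xy) for all x,y ∈ A, then φ is a character of A, i.e. φ is linear and multiplicative. -/
/-!
Taking `y = 1` gives `φ x ∈ σ x`. A continuous expression in `φ` of a parameter ranging over a
connected set, with values in a fixed spectrum, is constant because that spectrum is totally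
disconnected. Applied to `φ (t + x) - t ∈ σ x`, `t⁻¹ φ (t • x) ∈ σ x` and
`φ (u z) φ (u⁻¹) ∈ σ (u z u⁻¹) = σ z` for `u` in the unit ball around `1`, this gives translation
invariance, homogeneity and `φ (u z) = φ u φ z` (as `φ u φ u⁻¹ ∈ σ 1 = {1}`). Expanding
`φ ((1 + s x) (1 + s y))` and letting `s → 0` yields additivity, and then `φ ((1 + s x) z)` yields
multiplicativity.
-/

open Filter Topology

theorem IsPreconnected.eq_of_mapsTo_isTotallyDisconnected {X Y : Type*} [TopologicalSpace X]
    [TopologicalSpace Y] {s : Set X} (hs : IsPreconnected s) {f : X → Y} (hf : ContinuousOn f s)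
    {T : Set Y} (hT : IsTotallyDisconnected T) (hmaps : Set.MapsTo f s T) {a b : X}
    (ha : a ∈ s) (hb : b ∈ s) : f a = f b :=
  hT _ hmaps.image_subset (hs.image f hf) (Set.mem_image_of_mem f ha) (Set.mem_image_of_mem f hb)

theorem spectrum.eq_of_mem_algebraMap {B : Type*} [Ring B] [Algebra ℂ B] {r s : ℂ}
    (h : r ∈ spectrum ℂ (algebraMap ℂ B s)) : r = s := by
  by_contra hrs
  exact spectrum.mem_iff.1 h <| by
    simpa using (Ne.isUnit (sub_ne_zero.2 hrs)).map (algebraMap ℂ B)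

section NormedAlgebra

variable {B : Type*} [NormedRing B] [NormedAlgebra ℂ B] {φ : B → ℂ}

theorem map_algebraMap_add_of_mem_spectrum (htd : ∀ x : B, IsTotallyDisconnected (spectrum ℂ x))
    (hc : Continuous φ) (hspec : ∀ x, φ x ∈ spectrum ℂ x) (t : ℂ) (x : B) :
    φ (algebraMap ℂ B t + x) = t + φ x := by
  have h := isPreconnected_univ.eq_of_mapsTo_isTotallyDisconnected
    (f := fun s : ℂ => φ (algebraMap ℂ B s + x) - s) (by fun_prop) (htd x)
    (fun s _ => spectrum.add_mem_add_iff (s := s).1 (by simpa using hspec (algebraMap ℂ B s + x)))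
    (Set.mem_univ t) (Set.mem_univ 0)
  simp only [map_zero, zero_add, sub_zero] at h
  linear_combination h

theorem map_smul_of_mem_spectrum (htd : ∀ x : B, IsTotallyDisconnected (spectrum ℂ x))
    (hc : Continuous φ) (hspec : ∀ x, φ x ∈ spectrum ℂ x) (t : ℂ) (x : B) :
    φ (t • x) = t * φ x := by
  rcases eq_or_ne t 0 with rfl | ht
  · simpa using spectrum.eq_of_mem_algebraMap (B := B) (s := 0) (by simpa using hspec 0)
  have h := (isConnected_compl_singleton_of_one_lt_rank (by simp) (0 : ℂ)).isPreconnected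
    |>.eq_of_mapsTo_isTotallyDisconnected (f := fun s : ℂ => s⁻¹ * φ (s • x))
    (fun s hs => by fun_prop (disch := exact hs)) (htd x)
    (fun s (hs : s ≠ 0) => spectrum.smul_mem_smul_iff (r := Units.mk0 s hs).1 <| by
      simpa [Units.smul_def, hs] using hspec (s • x))
    (Set.mem_compl_singleton_iff.2 ht) (Set.mem_compl_singleton_iff.2 one_ne_zero)
  simp only [inv_one, one_mul, one_smul] at h
  field_simp at h
  linear_combination h

theorem eventually_one_add_smul_mem_ball_one (x : B) :
    ∀ᶠ s : ℂ in 𝓝 0, 1 + s • x ∈ Metric.ball (1 : B) 1 :=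
  (Continuous.tendsto' (by fun_prop) 0 1 (by simp)).eventually
    (Metric.isOpen_ball.mem_nhds (Metric.mem_ball_self one_pos))

theorem map_add_of_map_mul_of_mem_ball_one (hc : Continuous φ)
    (hsmul : ∀ (c : ℂ) x, φ (c • x) = c * φ x) (hone_add : ∀ x, φ (1 + x) = 1 + φ x)
    (hmul : ∀ a ∈ Metric.ball (1 : B) 1, ∀ z, φ (a * z) = φ a * φ z) (x y : B) :
    φ (x + y) = φ x + φ y := by
  have hexpand : ∀ s : ℂ, (1 + s • x) * (1 + s • y) = 1 + s • (x + y + s • (x * y)) := by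
    intro s
    simp only [add_mul, mul_add, one_mul, mul_one, smul_mul_smul, smul_add, smul_smul]
    abel
  have hpunct : ∀ᶠ s : ℂ in 𝓝[≠] 0,
      φ (x + y + s • (x * y)) = φ x + φ y + s * (φ x * φ y) := by
    filter_upwards [nhdsWithin_le_nhds (eventually_one_add_smul_mem_ball_one x),
      self_mem_nhdsWithin] with s hs (hs0 : s ≠ 0)
    have h := hmul _ hs (1 + s • y)
    rw [hexpand, hone_add, hone_add, hone_add, hsmul, hsmul, hsmul] at h
    apply mul_left_cancel₀ hs0
    linear_combination h
  have hcont : Continuous fun s : ℂ => φ (x + y + s • (x * y)) := by fun_prop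
  simpa using ((hcont.continuousAt.eventuallyEq_nhds_iff_eventuallyEq_nhdsNE
    (by fun_prop : Continuous fun s : ℂ => φ x + φ y + s * (φ x * φ y)).continuousAt).1
    hpunct).eq_of_nhds

theorem map_mul_of_map_mul_of_mem_ball_one (hone : φ 1 = 1)
    (hsmul : ∀ (c : ℂ) x, φ (c • x) = c * φ x) (hadd : ∀ x y, φ (x + y) = φ x + φ y)
    (hmul : ∀ a ∈ Metric.ball (1 : B) 1, ∀ z, φ (a * z) = φ a * φ z) (x z : B) :
    φ (x * z) = φ x * φ z := by
  obtain ⟨s, hs, hs0 : s ≠ 0⟩ := ((eventually_one_add_smul_mem_ball_one x).filter_mono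
    (nhdsWithin_le_nhds (s := {0}ᶜ)) |>.and self_mem_nhdsWithin).exists
  have h := hmul _ hs z
  rw [add_mul, one_mul, smul_mul_assoc, hadd, hadd, hsmul, hsmul, hone] at h
  apply mul_left_cancel₀ hs0
  linear_combination h

end NormedAlgebra

variable {A : Type*} [NormedRing A] [NormedAlgebra ℂ A] [CompleteSpace A]

theorem map_mul_of_mem_ball_one {φ : A → ℂ}
    (htd : ∀ x : A, IsTotallyDisconnected (spectrum ℂ x)) (hc : Continuous φ)
    (hone : φ 1 = 1) (hmul : ∀ x y : A, φ x * φ y ∈ spectrum ℂ (x * y))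
    {a : A} (ha : a ∈ Metric.ball (1 : A) 1) (z : A) : φ (a * z) = φ a * φ z := by
  have hunit : ∀ b ∈ Metric.ball (1 : A) 1, IsUnit b :=
    fun b hb => not_not.1 fun h => nonunits.subset_compl_ball h hb
  have hconj : φ (a * z) * φ (Ring.inverse a) = φ (1 * z) * φ (Ring.inverse 1) :=
    (convex_ball (1 : A) 1).isPreconnected.eq_of_mapsTo_isTotallyDisconnected
      (f := fun b => φ (b * z) * φ (Ring.inverse b))
      (fun b hb => by
        obtain ⟨u, rfl⟩ := hunit b hb
        exact ((hc.comp (continuous_mul_const z)).continuousAt.mul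
          (hc.continuousAt.comp (NormedRing.inverse_continuousAt u))).continuousWithinAt)
      (htd z)
      (fun b hb => by
        obtain ⟨u, rfl⟩ := hunit b hb
        simpa [Ring.inverse_unit] using hmul (u * z) ↑u⁻¹)
      ha (Metric.mem_ball_self one_pos)
  have hinv : φ a * φ (Ring.inverse a) = 1 :=
    spectrum.eq_of_mem_algebraMap (B := A) (s := 1) <| by
      simpa [Ring.mul_inverse_cancel a (hunit a ha)] using hmul a (Ring.inverse a)
  rw [one_mul, Ring.inverse_one, hone, mul_one] at hconj
  linear_combination φ a * hconj - φ (a * z) * hinv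

theorem stmt_8 (htd : ∀ x : A, IsTotallyDisconnected (spectrum ℂ x))
    (φ : A → ℂ) (hc : Continuous φ)
    (hone : φ 1 = 1)
    (hmul : ∀ x y : A, φ x * φ y ∈ spectrum ℂ (x * y)) :
    (∀ x y : A, φ (x + y) = φ x + φ y) ∧
    (∀ (c : ℂ) (x : A), φ (c • x) = c * φ x) ∧
    (∀ x y : A, φ (x * y) = φ x * φ y) := by
  have hspec : ∀ x, φ x ∈ spectrum ℂ x := fun x => by simpa [hone] using hmul x 1
  have hsmul := map_smul_of_mem_spectrum htd hc hspec
  have hone_add : ∀ x, φ (1 + x) = 1 + φ x := fun x => by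
    simpa using map_algebraMap_add_of_mem_spectrum htd hc hspec 1 x
  have hnear : ∀ a ∈ Metric.ball (1 : A) 1, ∀ z, φ (a * z) = φ a * φ z :=
    fun a ha => map_mul_of_mem_ball_one htd hc hone hmul ha
  have hadd := map_add_of_map_mul_of_mem_ball_one hc hsmul hone_add hnear
  exact ⟨hadd, hsmul, map_mul_of_map_mul_of_mem_ball_one hone hsmul hadd hnear⟩
end

section
/- If A is a finite-dimensional complex unital Banach algebra and φ : A → ℂ is continuous with φ(1) = 1 and φ(x)φ(y) ∈ σ(xy) for all x,y ∈ A, then φ is a character of A. -/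
/-!
A continuous function of a complex parameter with values in a finite spectrum is constant.
For a unit `u`, `t ↦ φ (x + t • u) * φ u⁻¹ - t` takes values in `σ (x * u⁻¹)`, which gives
`φ (x + t • u) = φ x + t * φ u`; as `λ - y` is a unit for `λ ∉ σ y`, this makes `φ` linear.
Then `(t * φ y - φ (x * y)) / (t - φ x) = φ ((t - x)⁻¹) * φ ((t - x) * y) ∈ σ y` is continuous
on the connected set `(σ x)ᶜ`, hence constant in `t`, which forces `φ (x * y) = φ x * φ y`.
-/

open Set

lemma IsIntegral.finite_spectrum {𝕜 A : Type*} [Field 𝕜] [Ring A] [Algebra 𝕜 A] {a : A}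
    (ha : IsIntegral 𝕜 a) : (spectrum 𝕜 a).Finite := by
  refine (Polynomial.finite_setOfPred_isRoot (minpoly.ne_zero ha)).subset fun z hz => ?_
  have hmem := spectrum.subset_polynomial_aeval a (minpoly 𝕜 a) ⟨z, hz, rfl⟩
  rw [minpoly.aeval] at hmem
  by_contra hz0
  exact hmem <| spectrum.mem_resolventSet_iff.mpr <| by
    simpa using (Ne.isUnit hz0).map (algebraMap 𝕜 A)

def IsSpectrallyMultiplicative {A : Type*} [Ring A] [Algebra ℂ A] (φ : A → ℂ) : Prop :=
  ∀ x y : A, φ x * φ y ∈ spectrum ℂ (x * y)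

namespace IsSpectrallyMultiplicative

variable {A : Type*} [Ring A] [Algebra ℂ A] {φ : A → ℂ}

lemma map_mem_spectrum (hφ : IsSpectrallyMultiplicative φ) (hone : φ 1 = 1) (x : A) :
    φ x ∈ spectrum ℂ x := by
  simpa [hone] using hφ x 1

lemma nontrivial (hφ : IsSpectrallyMultiplicative φ) : Nontrivial A := by
  by_contra h
  rw [not_nontrivial_iff_subsingleton] at h
  simpa [spectrum.of_subsingleton] using hφ 1 1

lemma map_algebraMap (hφ : IsSpectrallyMultiplicative φ) (hone : φ 1 = 1) (c : ℂ) :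
    φ (algebraMap ℂ A c) = c := by
  have := hφ.nontrivial
  simpa [spectrum.scalar_eq] using hφ.map_mem_spectrum hone (algebraMap ℂ A c)

lemma map_units_mul_map_inv (hφ : IsSpectrallyMultiplicative φ) (u : Aˣ) :
    φ u * φ ↑u⁻¹ = 1 := by
  have := hφ.nontrivial
  simpa [spectrum.one_eq] using hφ u ↑u⁻¹

section Topological

variable [TopologicalSpace A] [ContinuousAdd A] [ContinuousSMul ℂ A]

lemma map_add_smul_units (hφ : IsSpectrallyMultiplicative φ) (hc : Continuous φ)
    (hσ : ∀ a : A, (spectrum ℂ a).Finite) (x : A) (u : Aˣ) (t : ℂ) :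
    φ (x + t • u) = φ x + t * φ u := by
  set f : ℂ → ℂ := fun t => φ (x + t • u) * φ ↑u⁻¹ - t
  have hf : MapsTo f univ (spectrum ℂ (x * ↑u⁻¹)) := fun t _ => by
    have h := hφ (x + t • u) ↑u⁻¹
    rw [add_mul, smul_mul_assoc, Units.mul_inv, ← Algebra.algebraMap_eq_smul_one, add_comm] at h
    exact spectrum.add_mem_add_iff (s := t).mp (by simpa [f] using h)
  have hconst : f t = f 0 :=
    isPreconnected_univ.constant_of_mapsTo (hσ _).isDiscrete (by fun_prop) hf trivial trivial
  simp only [f, zero_smul, add_zero, sub_zero] at hconst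
  linear_combination φ u * hconst - (φ (x + t • u) - φ x) * hφ.map_units_mul_map_inv u

lemma map_algebraMap_sub (hφ : IsSpectrallyMultiplicative φ) (hone : φ 1 = 1)
    (hc : Continuous φ) (hσ : ∀ a : A, (spectrum ℂ a).Finite) {y : A} {t : ℂ}
    (ht : t ∉ spectrum ℂ y) : φ (algebraMap ℂ A t - y) = t - φ y := by
  have h := hφ.map_add_smul_units hc hσ y (spectrum.notMem_iff.mp ht).unit 1
  rw [IsUnit.unit_spec, one_smul, one_mul, add_sub_cancel, hφ.map_algebraMap hone] at h
  linear_combination -h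

lemma map_add (hφ : IsSpectrallyMultiplicative φ) (hone : φ 1 = 1) (hc : Continuous φ)
    (hσ : ∀ a : A, (spectrum ℂ a).Finite) (x y : A) : φ (x + y) = φ x + φ y := by
  obtain ⟨t, ht⟩ := (hσ y).exists_notMem
  have h := hφ.map_add_smul_units hc hσ (x + y) 1 (-t)
  have h' := hφ.map_add_smul_units hc hσ x (spectrum.notMem_iff.mp ht).unit (-1)
  rw [IsUnit.unit_spec, hφ.map_algebraMap_sub hone hc hσ ht] at h'
  have hxy : x + y + (-t) • ((1 : Aˣ) : A) = x + (-1 : ℂ) • (algebraMap ℂ A t - y) := by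
    rw [Algebra.algebraMap_eq_smul_one]; module
  rw [hxy, h', Units.val_one, hone] at h
  linear_combination -h

lemma map_smul (hφ : IsSpectrallyMultiplicative φ) (hone : φ 1 = 1) (hc : Continuous φ)
    (hσ : ∀ a : A, (spectrum ℂ a).Finite) (c : ℂ) (x : A) : φ (c • x) = c * φ x := by
  obtain ⟨t, ht⟩ := (hσ x).exists_notMem
  have h := hφ.map_add_smul_units hc hσ (algebraMap ℂ A (c * t))
    (spectrum.notMem_iff.mp ht).unit (-c)
  rw [IsUnit.unit_spec, hφ.map_algebraMap_sub hone hc hσ ht, hφ.map_algebraMap hone] at h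
  have hcx : algebraMap ℂ A (c * t) + (-c) • (algebraMap ℂ A t - x) = c • x := by
    rw [Algebra.algebraMap_eq_smul_one, Algebra.algebraMap_eq_smul_one]; module
  rw [hcx] at h
  linear_combination h

end Topological

section Linear

variable {L : A →ₗ[ℂ] ℂ}

lemma div_mem_spectrum_of_notMem (hL : IsSpectrallyMultiplicative L) (hone : L 1 = 1) {x : A}
    {t : ℂ} (ht : t ∉ spectrum ℂ x) (y : A) :
    (t * L y - L (x * y)) / (t - L x) ∈ spectrum ℂ y := by
  set u := (spectrum.notMem_iff.mp ht).unit
  have hLu : L u = t - L x := by simp [u, Algebra.algebraMap_eq_smul_one, hone]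
  have hLuy : L (u * y) = t * L y - L (x * y) := by
    simp [u, sub_mul, Algebra.algebraMap_eq_smul_one]
  have hLu_inv : L ↑u⁻¹ = (t - L x)⁻¹ :=
    eq_inv_of_mul_eq_one_right (hLu ▸ hL.map_units_mul_map_inv u)
  have h := hL ↑u⁻¹ (u * y)
  rw [u.inv_mul_cancel_left, hLuy, hLu_inv] at h
  rwa [div_eq_inv_mul]

lemma map_mul (hL : IsSpectrallyMultiplicative L) (hone : L 1 = 1)
    (hσ : ∀ a : A, (spectrum ℂ a).Finite) (x y : A) : L (x * y) = L x * L y := by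
  have hne : ∀ t ∉ spectrum ℂ x, t - L x ≠ 0 := fun t ht =>
    sub_ne_zero.mpr fun h => ht (h ▸ hL.map_mem_spectrum hone x)
  have hconn : IsPreconnected (spectrum ℂ x)ᶜ :=
    ((hσ x).countable.isConnected_compl_of_one_lt_rank (by simp)).isPreconnected
  obtain ⟨t₁, ht₁⟩ := (hσ x).exists_notMem
  obtain ⟨t₂, ht₂⟩ := ((hσ x).insert t₁).exists_notMem
  rw [mem_insert_iff, not_or] at ht₂
  have hconst := hconn.constant_of_mapsTo (hσ y).isDiscrete
    (f := fun t => (t * L y - L (x * y)) / (t - L x)) (ContinuousOn.div (by fun_prop)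
      (by fun_prop) hne) (fun t ht => hL.div_mem_spectrum_of_notMem hone ht y) ht₁ ht₂.2
  rw [div_eq_div_iff (hne _ ht₁) (hne _ ht₂.2)] at hconst
  have hprod : (t₂ - t₁) * (L (x * y) - L x * L y) = 0 := by linear_combination -hconst
  rcases mul_eq_zero.mp hprod with h | h
  · exact absurd (sub_eq_zero.mp h) ht₂.1
  · linear_combination h

end Linear

end IsSpectrallyMultiplicative

variable {A : Type*} [NormedRing A] [NormedAlgebra ℂ A] [CompleteSpace A] [FiniteDimensional ℂ A]

theorem stmt_9 (φ : A → ℂ) (hc : Continuous φ)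
    (hone : φ 1 = 1)
    (hmul : ∀ x y : A, φ x * φ y ∈ spectrum ℂ (x * y)) :
    (∀ x y : A, φ (x + y) = φ x + φ y) ∧
    (∀ (c : ℂ) (x : A), φ (c • x) = c * φ x) ∧
    (∀ x y : A, φ (x * y) = φ x * φ y) := by
  have hφ : IsSpectrallyMultiplicative φ := hmul
  have hσ (a : A) : (spectrum ℂ a).Finite := (IsIntegral.of_finite ℂ a).finite_spectrum
  have hadd := hφ.map_add hone hc hσ
  have hsmul := hφ.map_smul hone hc hσ
  let L : A →ₗ[ℂ] ℂ := ⟨⟨φ, hadd⟩, hsmul⟩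
  exact ⟨hadd, hsmul, (show IsSpectrallyMultiplicative L from hmul).map_mul hone hσ⟩
end

section
/- Let A be a unital C*-algebra and φ : A → ℂ continuous with φ(1) = 1 and φ(x)φ(y) ∈ σ(xy) for all x,y. If x is self-adjoint and φ(x) ≠ 0, then φ(1 + ix) = 1 + iφ(x). -/
variable {A : Type*} [NormedRing A] [StarRing A] [CStarRing A] [NormedAlgebra ℂ A] [CompleteSpace A] [StarModule ℂ A]

/-! Taking `y = 1` shows `φ a ∈ σ(a)` for every `a`. By the spectral mapping theorem for the
self-adjoint `x`, this gives `φ x = c` and `φ (1 + i x) = 1 + i t` with `c, t` real, while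
`c (1 + i t) ∈ σ(x (1 + i x)) = {s + i s² : s ∈ σ(x)}`. Comparing real and imaginary parts,
`s = c` and `c t = c²`, so `t = c` since `c ≠ 0`. -/

open Complex

theorem IsSelfAdjoint.exists_real_of_mem_spectrum_cfc {B : Type*} [CStarAlgebra B] {x : B}
    (hx : IsSelfAdjoint x) (f : ℂ → ℂ) {w : ℂ} (hw : w ∈ spectrum ℂ (cfc f x))
    (hf : ContinuousOn f (spectrum ℂ x) := by cfc_cont_tac) : ∃ r : ℝ, f r = w := by
  rw [cfc_map_spectrum f x] at hw
  obtain ⟨r, hr, rfl⟩ := hw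
  exact ⟨r.re, by rw [← hx.mem_spectrum_eq_re hr]⟩

theorem Complex.eq_of_ofReal_mul_one_add_I_mul_eq {c s t : ℝ} (hc : c ≠ 0)
    (h : (c : ℂ) * (1 + I * t) = s * (1 + I * s)) : t = c := by
  have hre : c = s := by simpa using congrArg re h
  have him : c * t = s * s := by simpa using congrArg im h
  subst hre
  exact mul_left_cancel₀ hc him

theorem mem_spectrum_of_mul_mem_spectrum {B : Type*} [Ring B] [Algebra ℂ B] (φ : B → ℂ)
    (hone : φ 1 = 1) (hmul : ∀ x y : B, φ x * φ y ∈ spectrum ℂ (x * y)) (x : B) :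
    φ x ∈ spectrum ℂ x := by
  simpa [hone] using hmul x 1

theorem stmt_10_general (φ : A → ℂ)
    (hone : φ 1 = 1)
    (hmul : ∀ x y : A, φ x * φ y ∈ spectrum ℂ (x * y))
    (x : A) (hx : IsSelfAdjoint x) (hφx : φ x ≠ 0) :
    φ (1 + Complex.I • x) = 1 + Complex.I * φ x := by
  let _ : CStarAlgebra A := { }
  have hz : (1 : A) + I • x = cfc (fun s : ℂ => 1 + I * s) x := by
    rw [cfc_add .., cfc_const_mul .., cfc_id' ℂ x, cfc_const 1 x, map_one]
  have hxz : x * ((1 : A) + I • x) = cfc (fun s : ℂ => s * (1 + I * s)) x := by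
    rw [cfc_mul .., cfc_add .., cfc_const_mul .., cfc_id' ℂ x, cfc_const 1 x, map_one]
  have hφx_real : φ x = ((φ x).re : ℂ) :=
    hx.mem_spectrum_eq_re (mem_spectrum_of_mul_mem_spectrum φ hone hmul x)
  obtain ⟨t, ht⟩ := hx.exists_real_of_mem_spectrum_cfc _ <| by
    rw [← hz]; exact mem_spectrum_of_mul_mem_spectrum φ hone hmul (1 + I • x)
  obtain ⟨s, hs⟩ := hx.exists_real_of_mem_spectrum_cfc _ <| by
    rw [← hxz]; exact hmul x (1 + I • x)
  rw [← ht, hφx_real] at hs ⊢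
  have hc : (φ x).re ≠ 0 := fun h => hφx (by rw [hφx_real, h, ofReal_zero])
  rw [Complex.eq_of_ofReal_mul_one_add_I_mul_eq hc hs.symm]

theorem stmt_10 (φ : A → ℂ) (hc : Continuous φ)
    (hone : φ 1 = 1)
    (hmul : ∀ x y : A, φ x * φ y ∈ spectrum ℂ (x * y))
    (x : A) (hx : IsSelfAdjoint x) (hφx : φ x ≠ 0) :
    φ (1 + Complex.I • x) = 1 + Complex.I * φ x :=
  stmt_10_general φ hone hmul x hx hφx
end

section
/- Let A be a unital C*-algebra and φ : A → ℂ continuous with φ(1) = 1 and φ(x)φ(y) ∈ σ(xy) for all x,y. If x is self-adjoint and φ(x) ≠ 0, then φ(tx) = tφ(x) for every real t. -/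
open Polynomial Complex Filter Topology

variable {A : Type*} [NormedRing A] [StarRing A] [CStarRing A] [NormedAlgebra ℂ A] [CompleteSpace A] [StarModule ℂ A]

set_option maxHeartbeats 1000000 in
set_option maxRecDepth 4000 in
theorem stmt_11 (φ : A → ℂ) (hc : Continuous φ)
    (hone : φ 1 = 1)
    (hmul : ∀ x y : A, φ x * φ y ∈ spectrum ℂ (x * y))
    (x : A) (hx : IsSelfAdjoint x) (hφx : φ x ≠ 0) :
    ∀ t : ℝ, φ ((t : ℂ) • x) = (t : ℂ) * φ x := by
  intro t
  have hreal : ∀ z : ℂ, z ∈ spectrum ℂ x → z = ((z.re : ℝ) : ℂ) := by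
    letI : CStarAlgebra A := { }
    exact fun z hz => hx.mem_spectrum_eq_re hz
  haveI hnt : Nontrivial A := by
    by_contra h
    rw [not_nontrivial_iff_subsingleton] at h
    exact (spectrum.mem_iff.mp (hmul 1 1)) (isUnit_of_subsingleton _)
  have ha : φ x ∈ spectrum ℂ x := by simpa [hone] using hmul x 1
  have haR : φ x = (((φ x).re : ℝ) : ℂ) := hreal _ ha
  set ar : ℝ := (φ x).re with har
  have harne : ar ≠ 0 := by
    intro h; apply hφx; rw [haR, h]; simp
  rcases eq_or_ne t 0 with ht | ht
  · -- t = 0 : show φ 0 = 0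
    subst ht
    simp only [Complex.ofReal_zero, zero_smul, zero_mul]
    have h0 := hmul 0 0
    rw [zero_mul] at h0
    by_contra hne
    have : IsUnit ((algebraMap ℂ A) (φ 0 * φ 0) - 0) := by
      rw [sub_zero]
      exact (IsUnit.mk0 _ (mul_ne_zero hne hne)).map (algebraMap ℂ A)
    exact (spectrum.mem_iff.mp h0) this
  · have key : ∀ ε : ℝ, ε ≠ 0 →
        φ ((t : ℂ) • x + ((ε : ℂ) * I) • 1) = (t : ℂ) * φ x + (ε : ℂ) * I := by
      intro ε hε
      set c : ℂ := (ε : ℂ) * I with hcdef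
      set u : A := (t : ℂ) • x + c • 1 with hudef
      have hu : u = aeval x (C (t : ℂ) * X + C c) := by
        rw [map_add, map_mul, aeval_X, aeval_C, aeval_C, Algebra.algebraMap_eq_smul_one,
          Algebra.algebraMap_eq_smul_one, smul_mul_assoc, one_mul, hudef]
      have hσu : spectrum ℂ u = (fun k : ℂ => (t : ℂ) * k + c) '' spectrum ℂ x := by
        rw [hu, spectrum.map_polynomial_aeval]
        simp
      have hφu : φ u ∈ spectrum ℂ u := by simpa [hone] using hmul u 1
      rw [hσu] at hφu
      obtain ⟨κ, hκ, hκeq⟩ := hφu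
      have hκR : κ = ((κ.re : ℝ) : ℂ) := hreal _ hκ
      set kr : ℝ := κ.re with hkr
      have hxu : x * u = aeval x (C (t : ℂ) * X ^ 2 + C c * X) := by
        simp only [hudef, map_add, map_mul, map_pow, aeval_X, aeval_C,
          Algebra.algebraMap_eq_smul_one, smul_mul_assoc, one_mul, mul_add,
          mul_smul_comm, sq, mul_one]
      have h2 := hmul x u
      rw [hxu, spectrum.map_polynomial_aeval] at h2
      obtain ⟨lam, hlam, hlameq⟩ := h2
      have hlR : lam = ((lam.re : ℝ) : ℂ) := hreal _ hlam
      set lr : ℝ := lam.re with hlr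
      -- hlameq : t * lam ^ 2 + c * lam = φ x * φ u
      rw [← hκeq] at hlameq
      rw [hlR, hκR, haR, hcdef] at hlameq
      simp only [eval_add, eval_mul, eval_pow, eval_C, eval_X, ← Complex.ofReal_pow] at hlameq
      have him := congrArg Complex.im hlameq
      have hre := congrArg Complex.re hlameq
      simp only [Complex.add_im, Complex.add_re, Complex.mul_im, Complex.mul_re,
        Complex.ofReal_im, Complex.ofReal_re, Complex.I_im, Complex.I_re] at him hre
      ring_nf at him hre
      have hlar : lr = ar := by
        have h4 : lr * ε = ar * ε := by linear_combination him
        exact mul_right_cancel₀ hε h4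
      have hkar : kr = ar := by
        rw [hlar] at hre
        have h3 : (t * ar) * kr = (t * ar) * ar := by linear_combination -hre
        exact mul_left_cancel₀ (mul_ne_zero ht harne) h3
      rw [← hκeq, hκR, hkar, haR]
    -- now take the limit ε → 0
    have hcontf : Continuous fun ε : ℝ => φ ((t : ℂ) • x + ((ε : ℂ) * I) • 1) := by
      apply hc.comp
      exact continuous_const.add ((Complex.continuous_ofReal.mul continuous_const).smul continuous_const)
    have h1 : Tendsto (fun ε : ℝ => φ ((t : ℂ) • x + ((ε : ℂ) * I) • 1)) (𝓝[≠] (0 : ℝ))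
        (𝓝 (φ ((t : ℂ) • x))) := by
      have := hcontf.tendsto 0
      simp only [Complex.ofReal_zero, zero_mul, zero_smul, add_zero] at this
      exact this.mono_left nhdsWithin_le_nhds
    have h2 : Tendsto (fun ε : ℝ => φ ((t : ℂ) • x + ((ε : ℂ) * I) • 1)) (𝓝[≠] (0 : ℝ))
        (𝓝 ((t : ℂ) * φ x)) := by
      have hg : Tendsto (fun ε : ℝ => (t : ℂ) * φ x + (ε : ℂ) * I) (𝓝 (0 : ℝ))
          (𝓝 ((t : ℂ) * φ x)) := by
        have : Continuous fun ε : ℝ => (t : ℂ) * φ x + (ε : ℂ) * I := by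
          exact continuous_const.add (Complex.continuous_ofReal.mul continuous_const)
        simpa using this.tendsto 0
      refine (hg.mono_left nhdsWithin_le_nhds).congr' ?_
      filter_upwards [self_mem_nhdsWithin] with ε (hε : ε ≠ 0)
      exact (key ε hε).symm
    exact tendsto_nhds_unique h1 h2
end

section
/- Let A be a unital C*-algebra and φ : A → ℂ continuous with φ(1) = 1 and φ(x)φ(y) ∈ σ(xy) for all x,y. If x is self-adjoint and φ(x) ≠ 0, then φ(xⁿ) = φ(x)ⁿ for every n ∈ ℕ. -/
variable {A : Type*} [NormedRing A] [StarRing A] [CStarRing A] [NormedAlgebra ℂ A] [CompleteSpace A] [StarModule ℂ A]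

set_option maxHeartbeats 2000000 in
theorem stmt_12 (φ : A → ℂ) (hc : Continuous φ)
    (hone : φ 1 = 1)
    (hmul : ∀ x y : A, φ x * φ y ∈ spectrum ℂ (x * y))
    (x : A) (hx : IsSelfAdjoint x) (hφx : φ x ≠ 0) :
    ∀ n : ℕ, φ (x ^ n) = (φ x) ^ n := by
  letI : CStarAlgebra A := { }
  -- A is nontrivial
  have hnt : Nontrivial A := by
    by_contra h
    have hsub : Subsingleton A := not_nontrivial_iff_subsingleton.mp h
    have hmem : φ 1 * φ 1 ∈ spectrum ℂ ((1 : A) * 1) := hmul 1 1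
    exact spectrum.mem_iff.mp hmem (isUnit_of_subsingleton _)
  intro n
  -- φ x is in σ x, hence real
  have hrx : φ x ∈ spectrum ℂ x := by
    have := hmul x 1
    rwa [hone, mul_one, mul_one] at this
  have hr_re : φ x = (φ x).re := hx.mem_spectrum_eq_re hrx
  set r : ℝ := (φ x).re with hr
  have hrne : r ≠ 0 := by
    intro h0
    apply hφx
    rw [hr_re, h0, Complex.ofReal_zero]
  have hspec_ne : (spectrum ℂ x).Nonempty := spectrum.nonempty x
  -- key claim for ε ≠ 0
  have key : ∀ ε : ℝ, ε ≠ 0 →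
      φ (x ^ n + (ε * Complex.I) • 1) = (r : ℂ) ^ n + ε * Complex.I := by
    intro ε hε
    set w : ℂ := ε * Complex.I with hw
    set z : A := x ^ n + w • 1 with hz
    -- z = aeval x (X^n + C w)
    have hz_aeval : z = Polynomial.aeval x (Polynomial.X ^ n + Polynomial.C w) := by
      simp [hz, Algebra.algebraMap_eq_smul_one]
    have hzx_aeval : z * x
        = Polynomial.aeval x (Polynomial.X ^ (n + 1) + Polynomial.C w * Polynomial.X) := by
      simp [hz, Algebra.algebraMap_eq_smul_one, add_mul, pow_succ, smul_mul_assoc]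
    -- φ z ∈ σ z
    have h1 : φ z ∈ spectrum ℂ z := by
      have := hmul z 1
      rwa [hone, mul_one, mul_one] at this
    rw [hz_aeval, spectrum.map_polynomial_aeval_of_nonempty x _ hspec_ne] at h1
    obtain ⟨θ, hθ, hθeq⟩ := h1
    rw [← hz_aeval] at hθeq
    have hθ_re : θ = (θ.re : ℂ) := hx.mem_spectrum_eq_re hθ
    simp only [Polynomial.eval_add, Polynomial.eval_pow, Polynomial.eval_X,
      Polynomial.eval_C] at hθeq
    -- φ z * φ x ∈ σ (z * x)
    have h2 : φ z * φ x ∈ spectrum ℂ (z * x) := hmul z x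
    rw [hzx_aeval, spectrum.map_polynomial_aeval_of_nonempty x _ hspec_ne] at h2
    obtain ⟨s, hs, hseq⟩ := h2
    have hs_re : s = (s.re : ℂ) := hx.mem_spectrum_eq_re hs
    simp only [Polynomial.eval_add, Polynomial.eval_pow, Polynomial.eval_X,
      Polynomial.eval_mul, Polynomial.eval_C] at hseq
    -- now do the real/imaginary part computation
    set a : ℝ := θ.re
    set b : ℝ := s.re
    -- rewrite everything in terms of reals
    rw [← hθeq, hθ_re, hr_re, hs_re, hw] at hseq
    have hseq' : (↑(b ^ (n + 1)) : ℂ) + (↑(ε * b) : ℂ) * Complex.I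
        = (↑(a ^ n) : ℂ) * ↑r + (↑(ε * r) : ℂ) * Complex.I := by
      push_cast
      linear_combination hseq
    have hIm := congrArg Complex.im hseq'
    have hRe := congrArg Complex.re hseq'
    simp only [Complex.add_im, Complex.add_re, Complex.mul_im, Complex.mul_re,
      Complex.I_re, Complex.I_im, Complex.ofReal_re, Complex.ofReal_im,
      mul_zero, mul_one, zero_mul, add_zero, zero_add, sub_zero, zero_sub,
      mul_zero] at hRe hIm
    -- hIm : ε * b = ε * r ; hRe : b ^ (n+1) = a ^ n * r
    have hbr : b = r := by
      have := mul_left_cancel₀ hε hIm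
      linarith
    have han : a ^ n = r ^ n := by
      have h1' : a ^ n * r = r ^ n * r := by
        rw [← pow_succ]
        rw [hbr] at hRe
        linarith
      exact mul_right_cancel₀ hrne h1'
    rw [← hθeq, hθ_re, hw]
    have hca : ((a : ℂ)) ^ n = ((r : ℂ)) ^ n := by exact_mod_cast congrArg Complex.ofReal han
    rw [hca]
  -- take the limit ε → 0 along nonzero ε
  have hlim1 : Filter.Tendsto (fun ε : ℝ => φ (x ^ n + (ε * Complex.I) • 1))
      (nhdsWithin 0 {0}ᶜ) (nhds (φ (x ^ n))) := by
    have hcont : Continuous fun ε : ℝ => φ (x ^ n + (ε * Complex.I) • 1) := by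
      apply hc.comp
      exact continuous_const.add (((Complex.continuous_ofReal.mul continuous_const)).smul
        continuous_const)
    have := hcont.tendsto 0
    simp only [Complex.ofReal_zero, zero_mul, zero_smul, add_zero] at this
    exact this.mono_left nhdsWithin_le_nhds
  have hlim2 : Filter.Tendsto (fun ε : ℝ => φ (x ^ n + (ε * Complex.I) • 1))
      (nhdsWithin 0 {0}ᶜ) (nhds ((r : ℂ) ^ n)) := by
    have hcont : Filter.Tendsto (fun ε : ℝ => (r : ℂ) ^ n + ε * Complex.I)
        (nhdsWithin 0 {0}ᶜ) (nhds ((r : ℂ) ^ n)) := by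
      have : Continuous fun ε : ℝ => (r : ℂ) ^ n + ε * Complex.I :=
        continuous_const.add (Complex.continuous_ofReal.mul continuous_const)
      have h0 := this.tendsto 0
      simp only [Complex.ofReal_zero, zero_mul, add_zero] at h0
      exact h0.mono_left nhdsWithin_le_nhds
    refine hcont.congr' ?_
    filter_upwards [self_mem_nhdsWithin] with ε hε
    exact (key ε hε).symm
  have := tendsto_nhds_unique hlim1 hlim2
  rw [this, hr_re]
end

section
/- Let A be a unital C*-algebra and φ : A → ℂ continuous with φ(1) = 1 and φ(x)φ(y) ∈ σ(xy) for all x,y. If x is self-adjoint and φ(x) = 0, then φ(x²) = 0. -/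
/-!
If `u` is invertible, `φ u * φ u⁻¹` lies in `σ 1 = {1}` while `φ (u ^ 2) * φ u⁻¹` lies in `σ u`,
so `‖φ (u ^ 2)‖ ≤ ‖u‖ * ‖φ u‖`. By continuity this persists on the closure of the invertibles,
which contains every self-adjoint `x` since `x - (t * I) • 1` is invertible for real `t ≠ 0`.
-/

open Filter Topology Complex

section BanachAlgebra

variable {A : Type*} [NormedRing A] [NormedAlgebra ℂ A] [CompleteSpace A] [NormOneClass A]
  {φ : A → ℂ}

lemma norm_map_sq_le_of_isUnit (hmul : ∀ x y : A, φ x * φ y ∈ spectrum ℂ (x * y))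
    {u : A} (hu : IsUnit u) : ‖φ (u ^ 2)‖ ≤ ‖u‖ * ‖φ u‖ := by
  obtain ⟨v, rfl⟩ := hu
  have : Nontrivial A := NormOneClass.nontrivial
  have h_inv : φ v * φ ↑v⁻¹ = 1 := by
    simpa using hmul v ↑v⁻¹
  have h_spec : φ (↑v ^ 2) * φ ↑v⁻¹ ∈ spectrum ℂ (v : A) := by
    have h_cancel : (v : A) ^ 2 * ↑v⁻¹ = v := by rw [sq, mul_assoc, Units.mul_inv, mul_one]
    have h := hmul ((v : A) ^ 2) ↑v⁻¹
    rwa [h_cancel] at h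
  calc ‖φ (↑v ^ 2)‖ = ‖φ (↑v ^ 2) * φ ↑v⁻¹‖ * ‖φ v‖ := by
        rw [← norm_mul, mul_assoc, mul_comm (φ ↑v⁻¹), h_inv, mul_one]
    _ ≤ ‖(v : A)‖ * ‖φ v‖ := by gcongr; exact spectrum.norm_le_norm_of_mem h_spec

lemma norm_map_sq_le_of_mem_closure_isUnit (hc : Continuous φ)
    (hmul : ∀ x y : A, φ x * φ y ∈ spectrum ℂ (x * y))
    {a : A} (ha : a ∈ closure {u : A | IsUnit u}) : ‖φ (a ^ 2)‖ ≤ ‖a‖ * ‖φ a‖ := by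
  refine closure_minimal (t := {a | ‖φ (a ^ 2)‖ ≤ ‖a‖ * ‖φ a‖})
    (fun u (hu : IsUnit u) => norm_map_sq_le_of_isUnit hmul hu) ?_ ha
  exact isClosed_le (by fun_prop) (by fun_prop)

end BanachAlgebra

lemma IsSelfAdjoint.mem_closure_setOf_isUnit {A : Type*} [CStarAlgebra A] {a : A}
    (ha : IsSelfAdjoint a) : a ∈ closure {u : A | IsUnit u} := by
  have h_unit (t : ℝ) (ht : t ≠ 0) : IsUnit (a - algebraMap ℂ A (t * I)) := by
    have h_not_mem : (t * I : ℂ) ∉ spectrum ℂ a := fun h => ht <| by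
      simpa using congrArg Complex.im (ha.mem_spectrum_eq_re h)
    simpa using (spectrum.notMem_iff.mp h_not_mem).neg
  have h_lim : Tendsto (fun t : ℝ => a - algebraMap ℂ A (t * I)) (𝓝[≠] 0) (𝓝 a) := by
    refine (Continuous.tendsto' ?_ 0 a ?_).mono_left nhdsWithin_le_nhds
    · fun_prop
    · simp
  exact mem_closure_of_tendsto h_lim (eventually_nhdsWithin_of_forall h_unit)

variable {A : Type*} [NormedRing A] [StarRing A] [CStarRing A] [NormedAlgebra ℂ A] [CompleteSpace A] [StarModule ℂ A]

theorem stmt_15_general (φ : A → ℂ) (hc : Continuous φ)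
    (hmul : ∀ x y : A, φ x * φ y ∈ spectrum ℂ (x * y))
    (x : A) (hx : IsSelfAdjoint x) (hφx : φ x = 0) :
    φ (x ^ 2) = 0 := by
  rcases subsingleton_or_nontrivial A with _ | _
  · rwa [Subsingleton.elim (x ^ 2) x]
  let : CStarAlgebra A :=
    { ‹NormedRing A›, ‹StarRing A›, ‹CompleteSpace A›, ‹CStarRing A›,
      ‹NormedAlgebra ℂ A›, ‹StarModule ℂ A› with }
  have h := norm_map_sq_le_of_mem_closure_isUnit hc hmul hx.mem_closure_setOf_isUnit
  rw [hφx, norm_zero, mul_zero] at h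
  exact norm_le_zero_iff.mp h

theorem stmt_15 (φ : A → ℂ) (hc : Continuous φ)
    (hone : φ 1 = 1)
    (hmul : ∀ x y : A, φ x * φ y ∈ spectrum ℂ (x * y))
    (x : A) (hx : IsSelfAdjoint x) (hφx : φ x = 0) :
    φ (x ^ 2) = 0 :=
  stmt_15_general φ hc hmul x hx hφx
end
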